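/- Define q_k(x) = p_k(x)/(x − 2)². Then q_k(x) is divisible by (x − 1) if and only if k ≡ 1 (mod 3). -/
import Mathlib


open Polynomial

/-- The polynomials `q_k = p_k / (x − 2)²`, defined by `q₀(x) = x² − 5x + 3`,
`q₁(x) = (x³ − 8x² + 17x − 5)(x − 1)`, and the recursion
`q_k(x) = (x² − 4x + 2)q_{k−1}(x) − q_{k−2}(x)`. -/
noncomputable def qSeq : ℕ → Polynomial ℚ
  | 0 => X ^ 2 - 5 * X + 3
  | 1 => (X ^ 3 - 8 * X ^ 2 + 17 * X - 5) * (X - 1)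
  | (k + 2) => (X ^ 2 - 4 * X + 2) * qSeq (k + 1) - qSeq k

lemma qSeq_rec_eval (m : ℕ) :
    (qSeq (m + 2)).eval 1 = -(qSeq (m + 1)).eval 1 - (qSeq m).eval 1 := by
  rw [qSeq]
  simp only [eval_sub, eval_mul, eval_add, eval_pow, eval_X, eval_ofNat]
  ring

lemma qSeq_eval_one : ∀ k : ℕ,
    (qSeq (3 * k)).eval 1 = -1 ∧ (qSeq (3 * k + 1)).eval 1 = 0 ∧
      (qSeq (3 * k + 2)).eval 1 = 1 := by
  intro k
  induction k with
  | zero =>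
    refine ⟨?_, ?_, ?_⟩
    · show (qSeq 0).eval 1 = -1
      rw [qSeq]; norm_num
    · show (qSeq 1).eval 1 = 0
      rw [qSeq]; norm_num
    · show (qSeq 2).eval 1 = 1
      rw [show (2 : ℕ) = 0 + 2 from rfl, qSeq_rec_eval]
      rw [show (0 : ℕ) + 1 = 1 from rfl, qSeq, qSeq]; norm_num
  | succ n ih =>
    obtain ⟨h0, h1, h2⟩ := ih
    have e3 : (qSeq (3 * n + 3)).eval 1 = -1 := by
      rw [show 3 * n + 3 = (3 * n + 1) + 2 by ring, qSeq_rec_eval,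
        show 3 * n + 1 + 1 = 3 * n + 2 by ring, h1, h2]; norm_num
    have e4 : (qSeq (3 * n + 4)).eval 1 = 0 := by
      rw [show 3 * n + 4 = (3 * n + 2) + 2 by ring, qSeq_rec_eval,
        show 3 * n + 2 + 1 = 3 * n + 3 by ring, h2, e3]; norm_num
    have e5 : (qSeq (3 * n + 5)).eval 1 = 1 := by
      rw [show 3 * n + 5 = (3 * n + 3) + 2 by ring, qSeq_rec_eval,
        show 3 * n + 3 + 1 = 3 * n + 4 by ring, e3, e4]; norm_num
    exact ⟨by rw [show 3 * (n + 1) = 3 * n + 3 by ring]; exact e3,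
      by rw [show 3 * (n + 1) + 1 = 3 * n + 4 by ring]; exact e4,
      by rw [show 3 * (n + 1) + 2 = 3 * n + 5 by ring]; exact e5⟩

/-- `q_k(x)` is divisible by `(x − 1)` if and only if `k ≡ 1 (mod 3)`. -/
theorem stmt_8 : ∀ k : ℕ, (X - 1) ∣ qSeq k ↔ k % 3 = 1 := by
  intro k
  have hdvd : (X - 1 : Polynomial ℚ) ∣ qSeq k ↔ (qSeq k).eval 1 = 0 := by
    have : (X - 1 : Polynomial ℚ) = X - C 1 := by simp
    rw [this, dvd_iff_isRoot]; rfl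
  rw [hdvd]
  have h := qSeq_eval_one (k / 3)
  have h3 : k % 3 = 0 ∨ k % 3 = 1 ∨ k % 3 = 2 := by omega
  rcases h3 with h3 | h3 | h3
  · rw [show k = 3 * (k / 3) by omega, h.1]
    constructor
    · intro h'; norm_num at h'
    · intro h'; omega
  · rw [show k = 3 * (k / 3) + 1 by omega, h.2.1]
    constructor
    · intro _; omega
    · intro _; rfl
  · rw [show k = 3 * (k / 3) + 2 by omega, h.2.2]
    constructor
    · intro h'; norm_num at h'
    · intro h'; omega
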